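/- Let Z ⊂ ℙ^n be the C(δ+n, n) intersection points of δ+n general hyperplanes with equations h_1, …, h_{δ+n} (δ ≥ 1). The space of homogeneous polynomials of degree δ+1 vanishing on Z has dimension C(δ+n, δ+1), and it is spanned by the products h_I = ∏_{i∈I} h_i for subsets I of size δ+1. -/

import Mathlib

open MvPolynomial

/-- The linear form with coefficient vector `c`, as a polynomial. -/
noncomputable def linForm {n : ℕ} (c : Fin n → ℂ) : MvPolynomial (Fin n) ℂ :=
  ∑ i, MvPolynomial.C (c i) * MvPolynomial.X i

/-- The affine cone over the point set `Z`: nonzero points lying on (at least) `n` of the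
hyperplanes `h_i = 0`. -/
def coneZ (n δ : ℕ) (h : Fin (δ + n) → (Fin (n + 1) → ℂ)) : Set (Fin (n + 1) → ℂ) :=
  {x | x ≠ 0 ∧ ∃ L : Finset (Fin (δ + n)), L.card = n ∧
    ∀ i ∈ L, MvPolynomial.eval x (linForm (h i)) = 0}

/-- The submodule of polynomials vanishing on `Z`. -/
noncomputable def vanishZ (n δ : ℕ) (h : Fin (δ + n) → (Fin (n + 1) → ℂ)) :
    Submodule ℂ (MvPolynomial (Fin (n + 1)) ℂ) :=
  ⨅ x ∈ coneZ n δ h, LinearMap.ker (MvPolynomial.aeval x).toLinearMap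

/-!
For each `n`-subset `L`, general position gives a point `y_L` of `Z` at which `h_i` vanishes
exactly for `i ∈ L`. Taking `k ∉ L`, the form `h_k · ∏_{i ∉ L} h_i` of degree `δ + 1` is nonzero at
`y_L` and vanishes at every other `y_{L'}`, so evaluation at the `y_L` has rank `C(δ+n, n)` on
forms of degree `δ + 1`, and the forms vanishing on `Z` have dimension at most
`C(δ+n+1, δ+1) - C(δ+n, n) = C(δ+n, δ+1)`.

Conversely the `C(δ+n, δ+1)` products `h_I` are linearly independent: every `h_i` with `i ∈ I`
is nonzero on the linear space `{h_j = 0 for j ∉ I}`, so, `ℂ` being infinite, this space has a point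
`p_I` off all of them; `h_I(p_I) ≠ 0` while `h_{I'}(p_I) = 0` for `I' ≠ I`. Hence they span.
-/

open Module

section LinearAlgebra

variable {K ι m : Type*} [Field K] [Fintype m]

theorem Matrix.mulVecLin_surjective_of_linearIndependent [Fintype ι] {M : Matrix ι m K}
    (hM : LinearIndependent K M.row) : Function.Surjective M.mulVecLin := by
  rw [← LinearMap.range_eq_top]
  apply Submodule.eq_top_of_finrank_eq
  rw [← Matrix.rank, hM.rank_matrix, finrank_fintype_fun_eq_card]

theorem Matrix.mulVecLin_injective_of_linearIndependent [Fintype ι] {M : Matrix ι m K}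
    (hM : LinearIndependent K M.row) (hcard : Fintype.card ι = Fintype.card m) :
    Function.Injective M.mulVecLin :=
  (LinearMap.injective_iff_surjective_of_finrank_eq_finrank (by simp [hcard])).mpr
    (Matrix.mulVecLin_surjective_of_linearIndependent hM)

theorem Module.Dual.exists_forall_apply_ne_zero [Infinite K] {V : Type*} [AddCommGroup V]
    [Module K V] {s : Finset ι} {f : ι → Dual K V} (hf : ∀ i ∈ s, f i ≠ 0) :
    ∃ v, ∀ i ∈ s, f i v ≠ 0 := by
  by_contra! hcover
  obtain ⟨i, hi⟩ := Subspace.exists_eq_top_of_iUnion_eq_univ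
    (p := fun i : s => LinearMap.ker (f i)) <| Set.eq_univ_of_forall fun v => by
      obtain ⟨i, hi, hv⟩ := hcover v
      exact Set.mem_iUnion.mpr ⟨⟨i, hi⟩, hv⟩
  exact hf i i.2 (LinearMap.ker_eq_top.mp hi)

theorem Submodule.finrank_inf_ker_add_finrank_map {V W : Type*} [AddCommGroup V] [Module K V]
    [AddCommGroup W] [Module K W] (p : Submodule K V) [FiniteDimensional K p] (f : V →ₗ[K] W) :
    finrank K ↥(p ⊓ LinearMap.ker f) + finrank K ↥(p.map f) = finrank K p := by
  rw [← LinearMap.range_domRestrict, ← Submodule.map_comap_subtype,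
    Submodule.finrank_map_subtype_eq, ← LinearMap.ker_domRestrict, add_comm]
  exact LinearMap.finrank_range_add_finrank_ker _

theorem linearIndependent_of_apply_ne_zero_iff {κ V : Type*} [AddCommGroup V] [Module K V]
    {v : κ → V} (φ : κ → Dual K V) (hφ : ∀ a b, φ a (v b) ≠ 0 ↔ a = b) :
    LinearIndependent K v := by
  classical
  refine linearIndependent_iff'.mpr fun s g hg a ha => ?_
  have hφa := congrArg (φ a) hg
  simp only [map_sum, map_smul, smul_eq_mul, map_zero] at hφa
  rw [Finset.sum_eq_single_of_mem a ha fun b _ hba => by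
    rw [not_ne_iff.mp (mt (hφ a b).mp (Ne.symm hba)), mul_zero]] at hφa
  exact (mul_eq_zero.mp hφa).resolve_right ((hφ a a).mpr rfl)

theorem Submodule.finrank_inf_add_card_le {κ V : Type*} [Fintype κ] [AddCommGroup V]
    [Module K V] (p q : Submodule K V) [FiniteDimensional K p] (φ : κ → Dual K V)
    (hq : ∀ a, ∀ x ∈ q, φ a x = 0) (Q : κ → V) (hQ : ∀ a, Q a ∈ p)
    (hφQ : ∀ a b, φ a (Q b) ≠ 0 ↔ a = b) :
    finrank K ↥(p ⊓ q) + Fintype.card κ ≤ finrank K p := by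
  let f := LinearMap.pi φ
  have hker : p ⊓ q ≤ p ⊓ LinearMap.ker f :=
    inf_le_inf_left p fun x hx => funext fun a => hq a x hx
  have hQf : LinearIndependent K (f ∘ Q) :=
    linearIndependent_of_apply_ne_zero_iff (fun a => LinearMap.proj a) hφQ
  have hmap : Fintype.card κ ≤ finrank K ↥(p.map f) := by
    rw [← finrank_span_eq_card hQf]
    exact Submodule.finrank_mono <| Submodule.span_le.mpr <| Set.range_subset_iff.mpr fun a =>
      Submodule.mem_map_of_mem (hQ a)
  have := Submodule.finrank_inf_ker_add_finrank_map p f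
  have := Submodule.finrank_mono hker
  omega

end LinearAlgebra

section HomogeneousPolynomials

instance MvPolynomial.finite_homogeneousSubmodule {σ R : Type*} [CommSemiring R] [Finite σ]
    (k : ℕ) : Module.Finite R ↥(homogeneousSubmodule σ R k) :=
  Module.Finite.iff_fg.mpr (homogeneousSubmodule_fg σ R k)

theorem MvPolynomial.finrank_homogeneousSubmodule {K σ : Type*} [Field K] [Fintype σ] (k : ℕ) :
    finrank K ↥(homogeneousSubmodule σ K k) = (Fintype.card σ + k - 1).choose k := by
  classical
  rw [homogeneousSubmodule_eq_finsupp_supported]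
  refine (finrank_eq_nat_card_basis (basisRestrictSupport K {d : σ →₀ ℕ | d.degree = k})).trans ?_
  rw [← Sym.card_sym_eq_choose, ← Nat.card_eq_fintype_card]
  exact Nat.card_congr ((Sym.equivNatSum σ k).trans (Equiv.subtypeEquivRight fun d => by
    simp [Finsupp.degree_apply, Finsupp.sum])).symm

end HomogeneousPolynomials

section GeneralPosition

variable {K ι m : Type*} [Field K] [Fintype m]

def InGeneralPosition (v : ι → m → K) : Prop :=
  ∀ T : Finset ι, T.card = Fintype.card m → LinearIndependent K (fun i : T => v i)

namespace InGeneralPosition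

variable {v : ι → m → K}

theorem eq_zero_of_dotProduct_eq_zero (hv : InGeneralPosition v) {T : Finset ι}
    (hT : T.card = Fintype.card m) {x : m → K} (hx : ∀ i ∈ T, v i ⬝ᵥ x = 0) : x = 0 := by
  refine Matrix.mulVecLin_injective_of_linearIndependent (M := Matrix.of fun i : T => v i)
    (hv T hT) (by rwa [Fintype.card_coe]) ?_
  ext i
  rw [map_zero, Pi.zero_apply]
  exact hx i i.2

variable [Fintype ι]

theorem linearIndependent (hv : InGeneralPosition v) (hm : Fintype.card m ≤ Fintype.card ι)
    {T : Finset ι} (hT : T.card ≤ Fintype.card m) : LinearIndependent K (fun i : T => v i) := by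
  obtain ⟨U, hTU, -, hU⟩ := Finset.exists_subsuperset_card_eq (Finset.subset_univ T) hT
    (by rwa [Finset.card_univ])
  exact (hv U hU).comp _ (Set.inclusion_injective (Finset.coe_subset.mpr hTU))

theorem exists_dotProduct_eq (hv : InGeneralPosition v) (hm : Fintype.card m ≤ Fintype.card ι)
    {T : Finset ι} (hT : T.card ≤ Fintype.card m) (c : ι → K) :
    ∃ x, ∀ i ∈ T, v i ⬝ᵥ x = c i := by
  obtain ⟨x, hx⟩ := Matrix.mulVecLin_surjective_of_linearIndependent
    (M := Matrix.of fun i : T => v i) (hv.linearIndependent hm hT) fun i => c i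
  exact ⟨x, fun i hi => congrFun hx ⟨i, hi⟩⟩

theorem exists_dotProduct_eq_zero_iff (hv : InGeneralPosition v)
    (hm : Fintype.card m ≤ Fintype.card ι) {L : Finset ι} (hL : L.card + 1 = Fintype.card m) :
    ∃ y, ∀ i, v i ⬝ᵥ y = 0 ↔ i ∈ L := by
  classical
  obtain ⟨k, -, hkL⟩ := Finset.exists_mem_notMem_of_card_lt_card
    (s := L) (t := Finset.univ) (by rw [Finset.card_univ]; omega)
  have hcard {i} (hi : i ∉ L) : (insert i L).card = Fintype.card m := by
    rw [Finset.card_insert_of_notMem hi, hL]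
  obtain ⟨y, hy⟩ := hv.exists_dotProduct_eq hm (hcard hkL).le (Pi.single k 1)
  have hyL : ∀ i ∈ L, v i ⬝ᵥ y = 0 := fun i hi => by
    rw [hy i (Finset.mem_insert_of_mem hi), Pi.single_eq_of_ne (ne_of_mem_of_not_mem hi hkL)]
  have hy0 : y ≠ 0 := fun h0 => by
    simpa [h0] using hy k (Finset.mem_insert_self k L)
  refine ⟨y, fun i => ⟨fun hi => ?_, hyL i⟩⟩
  by_contra hiL
  exact hy0 (hv.eq_zero_of_dotProduct_eq_zero (hcard hiL) fun j hj =>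
    (Finset.mem_insert.mp hj).elim (· ▸ hi) (hyL j))

theorem exists_forall_dotProduct_ne_zero [Infinite K] (hv : InGeneralPosition v)
    (hm : Fintype.card m ≤ Fintype.card ι) {J S : Finset ι} (hJ : J.card < Fintype.card m)
    (hJS : Disjoint J S) :
    ∃ p, (∀ j ∈ J, v j ⬝ᵥ p = 0) ∧ ∀ i ∈ S, v i ⬝ᵥ p ≠ 0 := by
  classical
  let N := LinearMap.ker (Matrix.of fun j : J => v j).mulVecLin
  have hN {x} : x ∈ N ↔ ∀ j ∈ J, v j ⬝ᵥ x = 0 := by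
    simp only [N, LinearMap.mem_ker, Matrix.mulVecLin_apply, funext_iff, Subtype.forall]
    rfl
  obtain ⟨⟨p, hpN⟩, hp⟩ := Module.Dual.exists_forall_apply_ne_zero
    (f := fun i => (dotProductBilin K K (v i)).comp N.subtype) (s := S) fun i hi h0 => by
      have hiJ : i ∉ J := Finset.disjoint_right.mp hJS hi
      obtain ⟨x, hx⟩ := hv.exists_dotProduct_eq hm
        (by rw [Finset.card_insert_of_notMem hiJ]; omega) (Pi.single i 1)
      have hxN : x ∈ N := hN.mpr fun j hj => by
        rw [hx j (Finset.mem_insert_of_mem hj), Pi.single_eq_of_ne (ne_of_mem_of_not_mem hj hiJ)]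
      simpa [hx i (Finset.mem_insert_self i J)] using LinearMap.congr_fun h0 ⟨x, hxN⟩
  exact ⟨p, hN.mp hpN, hp⟩

end InGeneralPosition

end GeneralPosition

section Hyperplanes

theorem eval_linForm {m : ℕ} (c x : Fin m → ℂ) : eval x (linForm c) = c ⬝ᵥ x := by
  simp [linForm, dotProduct]

theorem isHomogeneous_linForm {m : ℕ} (c : Fin m → ℂ) : (linForm c).IsHomogeneous 1 :=
  IsHomogeneous.sum _ _ _ fun i _ => isHomogeneous_C_mul_X _ i

theorem isHomogeneous_prod_linForm {ι : Type*} {m : ℕ} (c : ι → Fin m → ℂ) (I : Finset ι) :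
    (∏ i ∈ I, linForm (c i)).IsHomogeneous I.card := by
  simpa using IsHomogeneous.prod I (fun i => linForm (c i)) (fun _ => 1) fun i _ =>
    isHomogeneous_linForm (c i)

theorem InGeneralPosition.linearIndependent_prod_linForm {ι : Type*} [Fintype ι] {m k : ℕ}
    {v : ι → Fin m → ℂ} (hv : InGeneralPosition v) (hm : m ≤ Fintype.card ι)
    (hk : Fintype.card ι < m + k) :
    LinearIndependent ℂ fun I : {I : Finset ι // I.card = k} => ∏ i ∈ I.1, linForm (v i) := by
  classical
  choose p hpJ hpS using fun I : {I : Finset ι // I.card = k} =>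
    hv.exists_forall_dotProduct_ne_zero (by simpa using hm) (J := I.1ᶜ) (S := I.1)
      (by
        have := I.1.card_le_univ
        simp only [Finset.card_compl, I.2, Fintype.card_fin] at *
        omega)
      disjoint_compl_left
  refine linearIndependent_of_apply_ne_zero_iff (fun I => (aeval (p I)).toLinearMap) fun I I' => ?_
  change eval (p I) _ ≠ 0 ↔ I = I'
  rw [map_prod, Finset.prod_ne_zero_iff, Subtype.ext_iff, eq_comm,
    ← Finset.subset_iff_eq_of_card_le (by rw [I.2, I'.2])]
  refine forall₂_congr fun i _ => ?_
  rw [eval_linForm]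
  exact ⟨fun hi => by_contra fun hiI => hi (hpJ I i (Finset.mem_compl.mpr hiI)), hpS I i⟩

theorem eval_linForm_mul_prod_compl_ne_zero_iff {ι : Type*} [Fintype ι] [DecidableEq ι] {m : ℕ}
    {v : ι → Fin m → ℂ} {L L' : Finset ι} (hcard : L'.card ≤ L.card) {y : Fin m → ℂ}
    (hy : ∀ i, v i ⬝ᵥ y = 0 ↔ i ∈ L) {k : ι} (hk : k ∉ L') :
    eval y (linForm (v k) * ∏ i ∈ L'ᶜ, linForm (v i)) ≠ 0 ↔ L = L' := by
  simp only [map_mul, map_prod, eval_linForm, ne_eq, mul_eq_zero, Finset.prod_eq_zero_iff,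
    not_or, not_exists, not_and, hy, Finset.mem_compl]
  refine ⟨fun hL => (Finset.subset_iff_eq_of_card_le hcard).mp fun i hi =>
    by_contra fun hi' => hL.2 i hi' hi, ?_⟩
  rintro rfl
  exact ⟨hk, fun _ hi => hi⟩

variable {n δ : ℕ} {h : Fin (δ + n) → Fin (n + 1) → ℂ}

theorem mem_vanishZ_iff {q : MvPolynomial (Fin (n + 1)) ℂ} :
    q ∈ vanishZ n δ h ↔ ∀ x ∈ coneZ n δ h, eval x q = 0 := by
  simp only [vanishZ, Submodule.mem_iInf, LinearMap.mem_ker]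
  rfl

theorem prod_linForm_mem_vanishZ {I : Finset (Fin (δ + n))} (hI : I.card = δ + 1) :
    ∏ i ∈ I, linForm (h i) ∈ vanishZ n δ h := by
  rw [mem_vanishZ_iff]
  rintro x ⟨-, L, hL, hxL⟩
  obtain ⟨i, hi⟩ := Finset.inter_nonempty_of_card_lt_card_add_card (Finset.subset_univ I)
    (Finset.subset_univ L) (by simp [hI, hL])
  rw [map_prod]
  exact Finset.prod_eq_zero (Finset.mem_inter.mp hi).1 (hxL i (Finset.mem_inter.mp hi).2)

theorem finrank_homogeneousSubmodule_inf_vanishZ_le (hgen : InGeneralPosition h) (hδ : 1 ≤ δ) :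
    finrank ℂ ↥(homogeneousSubmodule (Fin (n + 1)) ℂ (δ + 1) ⊓ vanishZ n δ h) ≤
      (δ + n).choose (δ + 1) := by
  classical
  choose y hy using fun L : {L : Finset (Fin (δ + n)) // L.card = n} =>
    hgen.exists_dotProduct_eq_zero_iff (by simp; omega) (L := L.1) (by simp [L.2])
  choose k hk using fun L : {L : Finset (Fin (δ + n)) // L.card = n} =>
    Finset.exists_mem_notMem_of_card_lt_card (s := L.1) (t := Finset.univ) (by simp [L.2]; omega)
  have hyZ (L) : y L ∈ coneZ n δ h :=
    ⟨fun h0 => (hk L).2 ((hy L (k L)).mp (by simp [h0])), L.1, L.2, fun i hi => by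
      rw [eval_linForm]; exact (hy L i).mpr hi⟩
  have key := Submodule.finrank_inf_add_card_le
    (homogeneousSubmodule (Fin (n + 1)) ℂ (δ + 1)) (vanishZ n δ h)
    (fun L => (aeval (y L)).toLinearMap) (fun L q hq => mem_vanishZ_iff.mp hq (y L) (hyZ L))
    (fun L => linForm (h (k L)) * ∏ i ∈ L.1ᶜ, linForm (h i))
    (fun L => (mem_homogeneousSubmodule _ _).mpr <| by
      simpa [Finset.card_compl, L.2, add_comm] using
        (isHomogeneous_linForm (h (k L))).mul (isHomogeneous_prod_linForm h L.1ᶜ))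
    (fun L L' => (eval_linForm_mul_prod_compl_ne_zero_iff (by rw [L.2, L'.2]) (hy L)
      (hk L').2).trans Subtype.ext_iff.symm)
  rw [finrank_homogeneousSubmodule, Fintype.card_finset_len, Fintype.card_fin, Fintype.card_fin,
    show n + 1 + (δ + 1) - 1 = δ + n + 1 by omega, Nat.choose_succ_succ', ← Nat.choose_symm_add]
    at key
  omega

end Hyperplanes

/-- Let `Z ⊂ ℙ^n` be the `C(δ+n, n)` intersection points of `δ+n` general hyperplanes with
equations `h_1, …, h_{δ+n}` (`δ ≥ 1`).  The space of homogeneous polynomials of degree `δ+1`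
vanishing on `Z` has dimension `C(δ+n, δ+1)`, and is spanned by the products
`h_I = ∏_{i∈I} h_i` for subsets `I` of size `δ+1`. -/
theorem degree_succ_through_points (n δ : ℕ) (hδ : 1 ≤ δ)
    (h : Fin (δ + n) → (Fin (n + 1) → ℂ))
    (hgen : ∀ T : Finset (Fin (δ + n)), T.card = n + 1 →
      LinearIndependent ℂ (fun i : T => h i)) :
    Module.finrank ℂ
        ↥(MvPolynomial.homogeneousSubmodule (Fin (n + 1)) ℂ (δ + 1) ⊓ vanishZ n δ h) =
      Nat.choose (δ + n) (δ + 1) ∧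
    MvPolynomial.homogeneousSubmodule (Fin (n + 1)) ℂ (δ + 1) ⊓ vanishZ n δ h =
      Submodule.span ℂ {p | ∃ I : Finset (Fin (δ + n)), I.card = δ + 1 ∧
        p = ∏ i ∈ I, linForm (h i)} := by
  have hgen' : InGeneralPosition h := fun T hT => hgen T (by simpa using hT)
  let P (I : {I : Finset (Fin (δ + n)) // I.card = δ + 1}) := ∏ i ∈ I.1, linForm (h i)
  have hP : {p | ∃ I : Finset (Fin (δ + n)), I.card = δ + 1 ∧ p = ∏ i ∈ I, linForm (h i)} =
      Set.range P :=
    Set.ext fun p => ⟨fun ⟨I, hI, hp⟩ => ⟨⟨I, hI⟩, hp.symm⟩, fun ⟨I, hp⟩ => ⟨I.1, I.2, hp.symm⟩⟩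
  have hspan_le : Submodule.span ℂ (Set.range P) ≤
      homogeneousSubmodule (Fin (n + 1)) ℂ (δ + 1) ⊓ vanishZ n δ h :=
    Submodule.span_le.mpr <| Set.range_subset_iff.mpr fun I =>
      ⟨I.2 ▸ isHomogeneous_prod_linForm h I.1, prod_linForm_mem_vanishZ I.2⟩
  have hfinrank : finrank ℂ ↥(Submodule.span ℂ (Set.range P)) = (δ + n).choose (δ + 1) := by
    rw [finrank_span_eq_card (hgen'.linearIndependent_prod_linForm (by simp; omega)
      (by simp; omega)), Fintype.card_finset_len, Fintype.card_fin]
  have hspan := Submodule.eq_of_le_of_finrank_le hspan_le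
    (hfinrank ▸ finrank_homogeneousSubmodule_inf_vanishZ_le hgen' hδ)
  exact ⟨hspan ▸ hfinrank, by rw [hP, hspan]⟩
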